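/- Let r ∈ ℕ and let {A₁,A₂} and {C₁,C₂} be crossing separations of a connected graph G with r-tomic separators X := A₁∩A₂ and Y := C₁∩C₂. Then X and Y are r-coupled. -/

import Mathlib

namespace LS

open SimpleGraph

variable {V : Type*}

/-- `(A, B)` is an (oriented) separation of `G`: the two sides cover `V`
and there is no edge between `A ∖ B` and `B ∖ A`. -/
def IsSep (G : SimpleGraph V) (A B : Set V) : Prop :=
  A ∪ B = Set.univ ∧ ∀ a ∈ A \ B, ∀ b ∈ B \ A, ¬G.Adj a b

/-- `(A,B) ≥ (C,D)` for oriented separations, i.e. `A ⊆ C` and `B ⊇ D`. -/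
def SepGE (s t : Set V × Set V) : Prop := s.1 ⊆ t.1 ∧ t.2 ⊆ s.2

/-- Two (unoriented) separations are nested if they have `≥`-comparable orientations. -/
def Nested (s t : Set V × Set V) : Prop :=
  SepGE s t ∨ SepGE s (t.2, t.1) ∨ SepGE (s.2, s.1) t ∨ SepGE (s.2, s.1) (t.2, t.1)

/-- Two separations cross if they are not nested. -/
def Crosses (s t : Set V × Set V) : Prop := ¬Nested s t

/-- The neighbourhood `N_G(K)` of a vertex set `K`. -/
def nbhdSet (G : SimpleGraph V) (K : Set V) : Set V :=
  {v | v ∉ K ∧ ∃ u ∈ K, G.Adj u v}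

/-- `K` is (the vertex set of) a connected component of the subgraph of `G` induced on `S`. -/
def IsCompOf (G : SimpleGraph V) (K S : Set V) : Prop :=
  K.Nonempty ∧ K ⊆ S ∧ (G.induce K).Connected ∧ ∀ a ∈ K, ∀ b ∈ S, G.Adj a b → b ∈ K

/-- `K` is a component of `G − X` that is tight at `X`, i.e. `N_G(K) = X`. -/
def TightCompAt (G : SimpleGraph V) (K X : Set V) : Prop :=
  IsCompOf G K Xᶜ ∧ nbhdSet G K = X

/-- A separation `{A,B}` is tight if `G − (A ∩ B)` has tight components
contained in `A` and in `B`, respectively. -/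
def TightSep (G : SimpleGraph V) (A B : Set V) : Prop :=
  (∃ K, TightCompAt G K (A ∩ B) ∧ K ⊆ A) ∧ ∃ K, TightCompAt G K (A ∩ B) ∧ K ⊆ B

/-- `X` is a tight separator: `G − X` has at least two components tight at `X`. -/
def TightSeparator (G : SimpleGraph V) (X : Set V) : Prop :=
  ∃ K₁ K₂, K₁ ≠ K₂ ∧ TightCompAt G K₁ X ∧ TightCompAt G K₂ X

/-- The set `E_G(S,T)` of edges of `G` with one end in `S` and the other in `T`. -/
def edgesBetween (G : SimpleGraph V) (S T : Set V) : Set (Sym2 V) :=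
  {e | ∃ u v, G.Adj u v ∧ e = s(u, v) ∧ u ∈ S ∧ v ∈ T}

/-- `∂X`: the set of edges of `G` with exactly one end in `X`. -/
def edgeBdry (G : SimpleGraph V) (X : Set V) : Set (Sym2 V) :=
  {e | ∃ u v, G.Adj u v ∧ e = s(u, v) ∧ u ∈ X ∧ v ∉ X}

/-- The separator of an oriented separation. -/
def tsSep (s : Set V × Set V) : Set V := s.1 ∩ s.2

/-- `p` lists the three distinct oriented separations of a ⊤-star. -/
def IsTStar (G : SimpleGraph V) (p : Fin 3 → Set V × Set V) : Prop :=
  Function.Injective p ∧ (∀ i, IsSep G (p i).1 (p i).2) ∧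
  (∀ i j, i ≠ j → Disjoint ((p i).1 \ (p i).2) ((p j).1 \ (p j).2)) ∧
  (⋃ i, ((p i).1 \ (p i).2)) = (⋃ i, tsSep (p i))ᶜ ∧
  ∀ i, ∀ v ∈ tsSep (p i), ∃ j, j ≠ i ∧ v ∈ tsSep (p j)

/-- The centre `Z` of a ⊤-star. -/
def tsCentre (p : Fin 3 → Set V × Set V) : Set V := ⋂ i, tsSep (p i)

/-- The `ij`-link `X_{ij}` of a ⊤-star. -/
def tsLink (p : Fin 3 → Set V × Set V) (i j : Fin 3) : Set V :=
  (tsSep (p i) ∩ tsSep (p j)) \ tsCentre p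

/-- The ⊤-star `p` is relevant with base `p 0`. -/
def RelevantTStar (G : SimpleGraph V) (p : Fin 3 → Set V × Set V) : Prop :=
  IsTStar G p ∧ TightSep G (p 0).1 (p 0).2 ∧
  ∀ x ∈ tsLink p 1 2, ∀ i : Fin 3, i ≠ 0 →
    (∃ y ∈ tsLink p 0 i, G.Adj x y) ∨
    ∃ y ∈ tsLink p 0 i ∪ tsCentre p, ∃ K, IsCompOf G K ((p i).1 \ (p i).2) ∧
      x ∈ nbhdSet G K ∧ y ∈ nbhdSet G K

/-- A bottleneck of order `k` in `G`, encoded as a set of oriented separations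
closed under reversal (representing a set of unoriented separations). -/
def IsBottleneck (G : SimpleGraph V) (k : ℕ) (β : Set (Set V × Set V)) : Prop :=
  β.Nonempty ∧ (∀ s ∈ β, (s.2, s.1) ∈ β) ∧
  (∀ s ∈ β, IsSep G s.1 s.2 ∧ TightSep G s.1 s.2 ∧ (s.1 ∩ s.2).encard = k) ∧
  ∀ p : Fin 3 → Set V × Set V, RelevantTStar G p →
    (∀ i, (tsSep (p i)).encard ≤ (k : ℕ∞)) → p 0 ∈ β → p 1 ∈ β ∨ p 2 ∈ β

/-! ### Tangles -/

/-- A tangle of order `ℓ` in `G`. -/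
def IsTangle (G : SimpleGraph V) (ℓ : ℕ) (τ : Set (Set V × Set V)) : Prop :=
  (∀ s ∈ τ, IsSep G s.1 s.2 ∧ (s.1 ∩ s.2).encard < (ℓ : ℕ∞)) ∧
  (∀ A B : Set V, IsSep G A B → (A ∩ B).encard < (ℓ : ℕ∞) → ((A, B) ∈ τ ∨ (B, A) ∈ τ)) ∧
  (∀ A B : Set V, (A, B) ∈ τ → (B, A) ∈ τ → A = B) ∧
  ∀ s₁ ∈ τ, ∀ s₂ ∈ τ, ∀ s₃ ∈ τ,
    ¬(s₁.1 ∪ s₂.1 ∪ s₃.1 = Set.univ ∧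
      ∀ u v : V, G.Adj u v →
        (u ∈ s₁.1 ∧ v ∈ s₁.1) ∨ (u ∈ s₂.1 ∧ v ∈ s₂.1) ∨ (u ∈ s₃.1 ∧ v ∈ s₃.1))

/-- The separation `{A,B}` distinguishes the tangles `τ` and `τ'`. -/
def DistinguishesT (τ τ' : Set (Set V × Set V)) (A B : Set V) : Prop :=
  ((A, B) ∈ τ ∧ (B, A) ∈ τ') ∨ ((B, A) ∈ τ ∧ (A, B) ∈ τ')

/-- The separation `{A,B}` distinguishes the vertex sets `Y` and `Z`. -/
def DistSets (Y Z A B : Set V) : Prop :=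
  (Y ⊆ A ∧ (Y ∩ (A \ B)).Nonempty ∧ Z ⊆ B ∧ (Z ∩ (B \ A)).Nonempty) ∨
  (Y ⊆ B ∧ (Y ∩ (B \ A)).Nonempty ∧ Z ⊆ A ∧ (Z ∩ (A \ B)).Nonempty)

/-! ### The construction of the nested sets `N^k(G)` -/

/-- `X^k`: the union of all `k`-bottlenecks in `G`. -/
def Xk (G : SimpleGraph V) (k : ℕ) : Set (Set V × Set V) :=
  {s | ∃ β, IsBottleneck G k β ∧ s ∈ β}

/-- `x^k(s)`: the number of separations in `X^k` that `s` crosses. -/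
noncomputable def xk (G : SimpleGraph V) (k : ℕ) (s : Set V × Set V) : ℕ :=
  {t ∈ Xk G k | Crosses s t}.ncard

/-- `N^k(G,β)` relative to a previously constructed set `M` of separations:
the elements of `β` nested with `M` that minimise `x^k` among those. -/
def NkOfBeta (G : SimpleGraph V) (M : Set (Set V × Set V)) (k : ℕ)
    (β : Set (Set V × Set V)) : Set (Set V × Set V) :=
  {s ∈ β | (∀ t ∈ M, Nested s t) ∧
    ∀ s' ∈ β, (∀ t ∈ M, Nested s' t) → xk G k s ≤ xk G k s'}

/-- `N^k(G)` relative to a previously constructed set `M`. -/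
def NkStep (G : SimpleGraph V) (M : Set (Set V × Set V)) (k : ℕ) :
    Set (Set V × Set V) :=
  {s | ∃ β, IsBottleneck G k β ∧ s ∈ NkOfBeta G M k β}

/-- `N^{<k}(G) = ⋃_{j<k} N^j(G)`. -/
noncomputable def Nlt (G : SimpleGraph V) : ℕ → Set (Set V × Set V)
  | 0 => ∅
  | k + 1 => Nlt G k ∪ NkStep G (Nlt G k) k

/-- `N^k(G)`. -/
noncomputable def Nk (G : SimpleGraph V) (k : ℕ) : Set (Set V × Set V) :=
  NkStep G (Nlt G k) k

/-- `N(G) = ⋃_k N^k(G)`. -/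
noncomputable def NSet (G : SimpleGraph V) : Set (Set V × Set V) :=
  ⋃ k, Nk G k

/-! ### Walks, local components and local separations -/

/-- An `X`-walk: a walk having precisely its first and last vertex in `X`. -/
def IsXWalk (G : SimpleGraph V) (X : Set V) {u v : V} (W : G.Walk u v) : Prop :=
  u ∈ X ∧ v ∈ X ∧ ∀ w ∈ W.support, w ∈ X → w = u ∨ w = v

/-- An `r`-local `X`-walk: an `X`-walk contained in a cycle of length `≤ r`,
or an `X`-walk consisting of a single `X`-edge. -/
def IsLocalXWalk (G : SimpleGraph V) (r : ℕ) (X : Set V) {u v : V} (W : G.Walk u v) :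
    Prop :=
  IsXWalk G X W ∧
  ((∃ (a : V) (C : G.Walk a a), C.IsCycle ∧ C.length ≤ r ∧ ∀ e ∈ W.edges, e ∈ C.edges) ∨
    W.length = 1)

/-- An `r`-local `X`-path. -/
def IsLocalXPath (G : SimpleGraph V) (r : ℕ) (X : Set V) {u v : V} (W : G.Walk u v) :
    Prop :=
  IsLocalXWalk G r X W ∧ W.IsPath

/-- Walks that are concatenations of `r`-local `X`-paths. -/
inductive ConcatLocalPaths (G : SimpleGraph V) (r : ℕ) (X : Set V) :
    ∀ {u v : V}, G.Walk u v → Prop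
  | single {u v : V} (W : G.Walk u v) (h : IsLocalXPath G r X W) :
      ConcatLocalPaths G r X W
  | comp {u v w : V} (W₁ : G.Walk u v) (W₂ : G.Walk v w)
      (h₁ : IsLocalXPath G r X W₁) (h₂ : ConcatLocalPaths G r X W₂) :
      ConcatLocalPaths G r X (W₁.append W₂)

/-- `W ∈ W_r(X)`: `W` is a concatenation of `r`-local `X`-paths repeating no vertex of `X`. -/
def MemWr (G : SimpleGraph V) (r : ℕ) (X : Set V) {u v : V} (W : G.Walk u v) : Prop :=
  ConcatLocalPaths G r X W ∧ ∀ x ∈ X, ¬W.support.Duplicate x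

/-- `X` is `r`-tomic: any two of its vertices are joined by a walk in `W_r(X)`. -/
def Rtomic (G : SimpleGraph V) (r : ℕ) (X : Set V) : Prop :=
  ∀ x ∈ X, ∀ y ∈ X, x ≠ y → ∃ W : G.Walk x y, MemWr G r X W

/-- One step of the relation generating the `r`-local components at `X`:
`e = f`, or `e` and `f` are the first and last edges of an `r`-local `X`-walk
(both required to lie in `∂X`). -/
def LocalEdgeStep (G : SimpleGraph V) (r : ℕ) (X : Set V) (e f : Sym2 V) : Prop :=
  e ∈ edgeBdry G X ∧ f ∈ edgeBdry G X ∧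
  (e = f ∨ ∃ (u v : V) (W : G.Walk u v), IsLocalXWalk G r X W ∧
      W.edges.head? = some e ∧ W.edges.getLast? = some f)

/-- `F` is an `r`-local component at `X`: an equivalence class of the transitive
closure of `LocalEdgeStep` on `∂X`. -/
def LocalCompAt (G : SimpleGraph V) (r : ℕ) (X : Set V) (F : Set (Sym2 V)) : Prop :=
  ∃ e ∈ edgeBdry G X, F = {f | Relation.ReflTransGen (LocalEdgeStep G r X) e f}

/-- An edge set `F` is tight with respect to `X` if every vertex of `X`
is incident with an edge of `F`. -/
def TightLocalComp (X : Set V) (F : Set (Sym2 V)) : Prop :=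
  ∀ x ∈ X, ∃ e ∈ F, x ∈ e

/-- `X` is a tight `r`-local separator: at least two tight `r`-local components at `X`. -/
def TightLocalSeparator (G : SimpleGraph V) (r : ℕ) (X : Set V) : Prop :=
  ∃ F₁ F₂, F₁ ≠ F₂ ∧ LocalCompAt G r X F₁ ∧ LocalCompAt G r X F₂ ∧
    TightLocalComp X F₁ ∧ TightLocalComp X F₂

/-- `(E₁, X, E₂)` is an (oriented) `r`-local separation of `G`. -/
def IsLocalSep (G : SimpleGraph V) (r : ℕ) (E₁ : Set (Sym2 V)) (X : Set V)
    (E₂ : Set (Sym2 V)) : Prop :=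
  Disjoint E₁ E₂ ∧ E₁ ∪ E₂ = edgeBdry G X ∧
    ∀ F, LocalCompAt G r X F → F ⊆ E₁ ∨ F ⊆ E₂

/-- A tight `r`-local separation: each side includes a tight `r`-local component at `X`. -/
def TightLocalSep (G : SimpleGraph V) (r : ℕ) (E₁ : Set (Sym2 V)) (X : Set V)
    (E₂ : Set (Sym2 V)) : Prop :=
  IsLocalSep G r E₁ X E₂ ∧
  (∃ F, LocalCompAt G r X F ∧ TightLocalComp X F ∧ F ⊆ E₁) ∧
  ∃ F, LocalCompAt G r X F ∧ TightLocalComp X F ∧ F ⊆ E₂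

/-- The oriented `r`-local separation `s_r` induced by the oriented separation
`s = (A₁, A₂)`: its separator is `X = A₁ ∩ A₂`, and its sides are
`E_i = E_G(A_i ∖ X, X)`. -/
def inducedLocal (G : SimpleGraph V) (s : Set V × Set V) :
    Set (Sym2 V) × Set V × Set (Sym2 V) :=
  (edgesBetween G (s.1 \ (s.1 ∩ s.2)) (s.1 ∩ s.2), s.1 ∩ s.2,
    edgesBetween G (s.2 \ (s.1 ∩ s.2)) (s.1 ∩ s.2))

/-- Some cycle of `G` of length `≤ r` alternates between the disjoint sets `X` and `Y`:
it visits four distinct vertices `x, y, x', y'` in this cyclic order with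
`x, x' ∈ X` and `y, y' ∈ Y`. -/
def Alternates (G : SimpleGraph V) (r : ℕ) (X Y : Set V) : Prop :=
  ∃ (a : V) (C : G.Walk a a), C.IsCycle ∧ C.length ≤ r ∧
    ∃ (x y x' y' : V) (l₁ l₂ l₃ l₄ l₅ : List V),
      x ∈ X ∧ x' ∈ X ∧ y ∈ Y ∧ y' ∈ Y ∧ x ≠ x' ∧ y ≠ y' ∧
      C.support = l₁ ++ x :: l₂ ++ y :: l₃ ++ x' :: l₄ ++ y' :: l₅

/-- `X` and `Y` are `r`-coupled. -/
def RCoupled (G : SimpleGraph V) (r : ℕ) (X Y : Set V) : Prop :=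
  (X ∩ Y).Nonempty ∨ (Disjoint X Y ∧ Alternates G r X Y)

/-- The `X`-link for the side `Fi` of an `r`-local separation with separator `Y`:
vertices `x ∈ X ∖ Y` from which some walk in `W_r(X)` visits `Y` with its first
edge in `∂Y` lying in `Fi`. -/
def LocalLink (G : SimpleGraph V) (r : ℕ) (X Y : Set V) (Fi : Set (Sym2 V)) : Set V :=
  {x | x ∈ X \ Y ∧ ∃ (z : V) (W : G.Walk x z), MemWr G r X W ∧
      (∃ y ∈ Y, y ∈ W.support) ∧
      ∃ (e : Sym2 V) (l₁ l₂ : List (Sym2 V)), W.edges = l₁ ++ e :: l₂ ∧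
        e ∈ edgeBdry G Y ∧ e ∈ Fi ∧ ∀ e' ∈ l₁, e' ∉ edgeBdry G Y}

/-- The `r`-local separations `{E₁,X,E₂}` and `{F₁,Y,F₂}` cross. -/
def LocalCrosses (G : SimpleGraph V) (r : ℕ) (E₁ : Set (Sym2 V)) (X : Set V)
    (E₂ : Set (Sym2 V)) (F₁ : Set (Sym2 V)) (Y : Set V) (F₂ : Set (Sym2 V)) : Prop :=
  RCoupled G r X Y ∧ ∀ i j : Bool,
    (LocalLink G r X Y (cond j F₁ F₂)).Nonempty ∨
    (LocalLink G r Y X (cond i E₁ E₂)).Nonempty ∨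
    ((cond i E₁ E₂) ∩ (cond j F₁ F₂) ∩ edgeBdry G (X ∩ Y)).Nonempty

/-- The edge set of a walk, as a set. -/
def walkEdgeSet {G : SimpleGraph V} {a b : V} (W : G.Walk a b) : Set (Sym2 V) :=
  {e | e ∈ W.edges}

/-- The binary cycle space of `G` is generated by the cycles of length `≤ r`:
the edge set of every cycle is a symmetric difference of edge sets of cycles
of length `≤ r`. -/
def CycleSpaceGenShort (G : SimpleGraph V) (r : ℕ) : Prop :=
  ∀ ⦃a : V⦄ (C : G.Walk a a), C.IsCycle →
    ∃ L : List ((b : V) × G.Walk b b),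
      (∀ p ∈ L, p.2.IsCycle ∧ p.2.length ≤ r) ∧
      walkEdgeSet C = L.foldr (fun p E => symmDiff (walkEdgeSet p.2) E) ∅

/-! ### Local ⊤-stars and local bottlenecks -/

/-- `q` lists the three oriented `r`-local separations of an `r`-local ⊤-star. -/
def IsLocalTStar (G : SimpleGraph V) (r : ℕ)
    (q : Fin 3 → Set (Sym2 V) × Set V × Set (Sym2 V)) : Prop :=
  Function.Injective q ∧
  (∀ i, IsLocalSep G r (q i).1 (q i).2.1 (q i).2.2) ∧
  (∀ i j, i ≠ j → Disjoint (q i).1 (q j).1) ∧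
  (⋃ i, (q i).1) = edgeBdry G (⋃ i, (q i).2.1) ∧
  (∀ i, ∀ v ∈ (q i).2.1, ∃ j, j ≠ i ∧ v ∈ (q j).2.1) ∧
  ∀ F, LocalCompAt G r (⋃ i, (q i).2.1) F → ∃ i, F ⊆ (q i).1

/-- The `r`-local ⊤-star `q` is relevant with base `q 0`. -/
def RelevantLocalTStar (G : SimpleGraph V) (r : ℕ)
    (q : Fin 3 → Set (Sym2 V) × Set V × Set (Sym2 V)) : Prop :=
  IsLocalTStar G r q ∧ TightLocalSep G r (q 0).1 (q 0).2.1 (q 0).2.2 ∧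
  ∀ x ∈ ((q 1).2.1 ∩ (q 2).2.1) \ ⋂ j, (q j).2.1, ∀ i : Fin 3, i ≠ 0 →
    (∃ y ∈ ((q 0).2.1 ∩ (q i).2.1) \ ⋂ j, (q j).2.1, G.Adj x y) ∨
    ∃ F, LocalCompAt G r (⋃ j, (q j).2.1) F ∧ F ⊆ (q i).1 ∧
      (∃ e ∈ F, x ∈ e) ∧ ∃ e ∈ F, ∃ y ∈ (q 0).2.1 ∩ (q i).2.1, y ∈ e

/-- An `r`-local bottleneck of order `k` in `G`, encoded as a set of oriented
`r`-local separations closed under reversal. -/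
def IsLocalBottleneck (G : SimpleGraph V) (r k : ℕ)
    (β : Set (Set (Sym2 V) × Set V × Set (Sym2 V))) : Prop :=
  β.Nonempty ∧ (∀ q ∈ β, (q.2.2, q.2.1, q.1) ∈ β) ∧
  (∀ q ∈ β, TightLocalSep G r q.1 q.2.1 q.2.2 ∧ q.2.1.encard = (k : ℕ∞)) ∧
  ∀ p : Fin 3 → Set (Sym2 V) × Set V × Set (Sym2 V), RelevantLocalTStar G r p →
    (∀ i, ((p i).2.1).encard ≤ (k : ℕ∞)) → p 0 ∈ β → p 1 ∈ β ∨ p 2 ∈ β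

/-! If the separators `X` and `Y` are disjoint, crossing forces all four corners `Aᵢ ∩ Cⱼ`
to be nonempty; as `G` is connected, no corner can be cut off by `X ∪ Y`, so `X` meets both
strict sides of `{C₁, C₂}` or `Y` meets both strict sides of `{A₁, A₂}`. Say `X` does. Since
`X` is `r`-tomic, some `r`-local `X`-path runs from `C₁ ∖ C₂` to `C₂ ∖ C₁`; it is not a single
edge, so it lies on a cycle of length `≤ r`. Both arcs of that cycle between its two ends
cross the separator `Y`, so the cycle alternates between `X` and `Y`. -/

section

open List

variable {G : SimpleGraph V} {r : ℕ}

lemma IsSep.symm {A B : Set V} (h : IsSep G A B) : IsSep G B A :=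
  ⟨by rw [Set.union_comm]; exact h.1, fun a ha b hb hab => h.2 b hb a ha hab.symm⟩

lemma IsSep.mem_left_of_not_mem_right {A B : Set V} (h : IsSep G A B) {v : V} (hv : v ∉ B) :
    v ∈ A :=
  ((h.1 ▸ Set.mem_univ v : v ∈ A ∪ B)).resolve_right hv

lemma IsSep.mem_of_adj {A B : Set V} (h : IsSep G A B) {a b : V} (ha : a ∈ A \ B)
    (hab : G.Adj a b) : b ∈ A := by
  by_contra hb
  exact h.2 a ha b ⟨h.symm.mem_left_of_not_mem_right hb, hb⟩ hab

lemma exists_eq_append_cons_of_cons_sublist {α : Type*} {a : α} {l s : List α}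
    (h : a :: l <+ s) : ∃ s₁ s₂, s = s₁ ++ a :: s₂ ∧ l <+ s₂ := by
  obtain ⟨r₁, r₂, rfl, ha, hl⟩ := List.cons_sublist_iff.mp h
  obtain ⟨s₁, s₂, rfl⟩ := List.append_of_mem ha
  exact ⟨s₁, s₂ ++ r₂, by simp, hl.trans (List.sublist_append_right _ _)⟩

lemma pair_sublist_or_pair_sublist {α : Type*} {a b : α} {l : List α} (ha : a ∈ l) (hb : b ∈ l)
    (hab : a ≠ b) : [a, b] <+ l ∨ [b, a] <+ l := by
  obtain ⟨s₁, s₂, rfl⟩ := List.append_of_mem ha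
  rcases List.mem_append.mp hb with hb | hb
  · exact Or.inr ((List.singleton_sublist.mpr hb).append (List.singleton_sublist.mpr
      (List.mem_cons_self)))
  · refine Or.inl ((List.nil_sublist s₁).append ?_)
    exact List.cons_sublist_cons.mpr (List.singleton_sublist.mpr
      ((List.mem_cons.mp hb).resolve_left hab.symm))

lemma exists_mem_inter_between {S₁ S₂ : Set V} (hS : IsSep G S₁ S₂) :
    ∀ {L : List V} {a b : V}, L.IsChain G.Adj → [a, b] <+ L → a ∈ S₁ \ S₂ → b ∈ S₂ \ S₁ →
      ∃ z ∈ S₁ ∩ S₂, [a, z, b] <+ L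
  | [], _, _, _, h, _, _ => absurd h (by simp)
  | c :: L, a, b, hL, hab, ha, hb => by
    rcases List.sublist_cons_iff.mp hab with hab | ⟨_, hc, hbL⟩
    · obtain ⟨z, hz, h⟩ := exists_mem_inter_between hS hL.tail hab ha hb
      exact ⟨z, hz, h.cons c⟩
    obtain ⟨rfl, rfl⟩ := List.cons.inj hc
    obtain _ | ⟨d, L⟩ := L
    · simp at hbL
    have had : G.Adj a d := (List.isChain_cons_cons.mp hL).1
    have hd₁ : d ∈ S₁ := hS.mem_of_adj ha had
    have hbL : b ∈ L := by
      refine (List.mem_cons.mp (List.singleton_sublist.mp hbL)).resolve_left ?_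
      rintro rfl
      exact hb.2 hd₁
    by_cases hd₂ : d ∈ S₂
    · exact ⟨d, ⟨hd₁, hd₂⟩, List.cons_sublist_cons.mpr (List.cons_sublist_cons.mpr
        (List.singleton_sublist.mpr hbL))⟩
    obtain ⟨z, hz, h⟩ := exists_mem_inter_between hS hL.tail
      (List.cons_sublist_cons.mpr (List.singleton_sublist.mpr hbL)) ⟨hd₁, hd₂⟩ hb
    have h : [z, b] <+ L := List.cons_sublist_cons.mp (h : [d, z, b] <+ d :: L)
    exact ⟨z, hz, List.cons_sublist_cons.mpr (h.cons d)⟩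

lemma exists_mem_inter_between_of_sublist {S₁ S₂ : Set V} (hS : IsSep G S₁ S₂)
    {L l₁ l₂ : List V} {a b : V} (hL : L.IsChain G.Adj) (h : l₁ ++ a :: b :: l₂ <+ L)
    (ha : a ∈ S₁ \ S₂) (hb : b ∈ S₂ \ S₁) :
    ∃ z ∈ S₁ ∩ S₂, l₁ ++ a :: z :: b :: l₂ <+ L := by
  obtain ⟨L₁, L₂, rfl, h₁, h₂⟩ := List.append_sublist_iff.mp h
  obtain ⟨M₁, M₂, rfl, hM₁, hM₂⟩ := (List.append_sublist_iff (l₁ := [a, b])).mp h₂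
  obtain ⟨z, hz, hM⟩ := exists_mem_inter_between hS (hL.infix (List.infix_append' _ _ _))
    hM₁ ha hb
  exact ⟨z, hz, h₁.append (hM.append hM₂)⟩

lemma exists_rotate_support_eq {a u : V} {C : G.Walk a a} (hC : C.IsCycle)
    (hu : u ∈ C.support) :
    ∃ (C' : G.Walk u u) (d : List V), C'.IsCycle ∧ C'.length = C.length ∧
      C'.support = u :: (d ++ [u]) ∧ ∀ v ∈ C.support, v ≠ u → v ∈ d := by
  classical
  have hC' : (C.rotate u hu).IsCycle := hC.rotate hu
  obtain ⟨d, hsupp⟩ : ∃ d, (C.rotate u hu).support = u :: (d ++ [u]) :=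
    ⟨_, by rw [← Walk.cons_tail_support, ← Walk.support_tail_of_not_nil _ hC'.not_nil,
      Walk.dropLast_support_concat]⟩
  refine ⟨C.rotate u hu, d, hC', C.length_rotate u hu, hsupp, fun v hv hvu => ?_⟩
  rw [← Walk.mem_support_rotate_iff C u hu, hsupp] at hv
  simpa [hvu] using hv

lemma alternates_of_sublist {X Y : Set V} {u b c d : V} {C : G.Walk u u} (hC : C.IsCycle)
    (hlen : C.length ≤ r) (h : [u, b, c, d, u] <+ C.support) (hu : u ∈ X) (hb : b ∈ Y)
    (hc : c ∈ X) (hd : d ∈ Y) : Alternates G r X Y := by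
  have hnd : [b, c, d, u].Nodup := by
    refine List.Sublist.nodup ?_ hC.support_nodup
    rw [← C.cons_tail_support] at h
    exact List.cons_sublist_cons.mp h
  obtain ⟨l₁, s₁, hs₁, h₁⟩ := exists_eq_append_cons_of_cons_sublist h
  obtain ⟨l₂, s₂, rfl, h₂⟩ := exists_eq_append_cons_of_cons_sublist h₁
  obtain ⟨l₃, s₃, rfl, h₃⟩ := exists_eq_append_cons_of_cons_sublist h₂
  obtain ⟨l₄, l₅, rfl, -⟩ := exists_eq_append_cons_of_cons_sublist h₃
  refine ⟨u, C, hC, hlen, u, b, c, d, l₁, l₂, l₃, l₄, l₅, hu, hc, hb, hd, ?_, ?_, by simp [hs₁]⟩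
  · rintro rfl; simp at hnd
  · rintro rfl; simp at hnd

lemma alternates_inter_right_of_isCycle {X S₁ S₂ : Set V} (hS : IsSep G S₁ S₂) {a p q : V}
    {C : G.Walk a a} (hC : C.IsCycle) (hlen : C.length ≤ r) (hpC : p ∈ C.support)
    (hqC : q ∈ C.support) (hpX : p ∈ X) (hqX : q ∈ X) (hp : p ∈ S₁ \ S₂) (hq : q ∈ S₂ \ S₁) :
    Alternates G r X (S₁ ∩ S₂) := by
  obtain ⟨C', d, hC', hlen', hsupp, hd⟩ := exists_rotate_support_eq hC hpC
  have hqd : q ∈ d := hd q hqC fun h => hq.2 (h ▸ hp.1)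
  have hchain := C'.isChain_adj_support
  rw [hsupp] at hchain
  have h₀ : [] ++ p :: q :: [p] <+ p :: (d ++ [p]) :=
    List.cons_sublist_cons.mpr ((List.singleton_sublist.mpr hqd).append (List.Sublist.refl _))
  obtain ⟨z, hz, h₁⟩ := exists_mem_inter_between_of_sublist hS hchain h₀ hp hq
  obtain ⟨z', hz', h₂⟩ := exists_mem_inter_between_of_sublist hS.symm hchain
    (l₁ := [p, z]) h₁ hq hp
  rw [Set.inter_comm] at hz'
  exact alternates_of_sublist hC' (hlen'.trans_le hlen) (hsupp ▸ h₂) hpX hz hqX hz'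

lemma alternates_inter_left_of_isCycle {X S₁ S₂ : Set V} (hS : IsSep G S₁ S₂) {a p q : V}
    {C : G.Walk a a} (hC : C.IsCycle) (hlen : C.length ≤ r) (hpC : p ∈ C.support)
    (hqC : q ∈ C.support) (hpX : p ∈ X) (hqX : q ∈ X) (hp : p ∈ S₁ \ S₂) (hq : q ∈ S₂ \ S₁) :
    Alternates G r (S₁ ∩ S₂) X := by
  have hpq : p ≠ q := fun h => hq.2 (h ▸ hp.1)
  obtain ⟨x, hx, hxC⟩ : ∃ x ∈ S₁ ∩ S₂, x ∈ C.support := by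
    rcases pair_sublist_or_pair_sublist hpC hqC hpq with h | h
    · obtain ⟨x, hx, h⟩ := exists_mem_inter_between hS C.isChain_adj_support h hp hq
      exact ⟨x, hx, h.subset (by simp)⟩
    · obtain ⟨x, hx, h⟩ := exists_mem_inter_between hS.symm C.isChain_adj_support h hq hp
      exact ⟨x, Set.inter_comm S₂ S₁ ▸ hx, h.subset (by simp)⟩
  obtain ⟨C', d, hC', hlen', hsupp, hd⟩ := exists_rotate_support_eq hC hxC
  have hchain := C'.isChain_adj_support
  rw [hsupp] at hchain
  have hframe {v w : V} (h : [v, w] <+ d) : [x] ++ v :: w :: [x] <+ x :: (d ++ [x]) :=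
    List.cons_sublist_cons.mpr (h.append (List.Sublist.refl _))
  rcases pair_sublist_or_pair_sublist (hd p hpC fun h => hp.2 (h ▸ hx.2))
    (hd q hqC fun h => hq.2 (h ▸ hx.1)) hpq with h | h
  · obtain ⟨x', hx', h'⟩ := exists_mem_inter_between_of_sublist hS hchain (hframe h) hp hq
    exact alternates_of_sublist hC' (hlen'.trans_le hlen) (hsupp ▸ h') hx hpX hx' hqX
  · obtain ⟨x', hx', h'⟩ := exists_mem_inter_between_of_sublist hS.symm hchain (hframe h) hq hp
    rw [Set.inter_comm] at hx'
    exact alternates_of_sublist hC' (hlen'.trans_le hlen) (hsupp ▸ h') hx hqX hx' hpX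

lemma ConcatLocalPaths.exists_isLocalXPath_boundary {X S : Set V} {u v : V} {W : G.Walk u v}
    (hW : ConcatLocalPaths G r X W) (hu : u ∈ S) (hv : v ∉ S) :
    ∃ (p q : V) (P : G.Walk p q), IsLocalXPath G r X P ∧ p ∈ S ∧ q ∉ S := by
  induction hW with
  | single W hW => exact ⟨_, _, W, hW, hu, hv⟩
  | @comp u w v W₁ W₂ hW₁ _ ih =>
    by_cases hw : w ∈ S
    · exact ih hw hv
    · exact ⟨_, _, W₁, hW₁, hu, hw⟩

lemma IsLocalXWalk.exists_isCycle_of_isSep {X S₁ S₂ : Set V} (hS : IsSep G S₁ S₂) {p q : V}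
    {P : G.Walk p q} (hP : IsLocalXWalk G r X P) (hp : p ∈ S₁ \ S₂) (hq : q ∈ S₂ \ S₁) :
    ∃ (a : V) (C : G.Walk a a), C.IsCycle ∧ C.length ≤ r ∧ p ∈ C.support ∧ q ∈ C.support := by
  rcases hP.2 with ⟨a, C, hC, hlen, hPC⟩ | hP₁
  · have hP : ¬P.Nil := fun h => hq.2 (h.eq ▸ hp.1)
    have hsupp {v : V} (hv : v ∈ P.support) : v ∈ C.support := by
      obtain ⟨e, he, hve⟩ := (Walk.mem_support_iff_exists_mem_edges_of_not_nil hP).mp hv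
      exact Walk.mem_support_of_mem_edges (hPC e he) hve
    exact ⟨a, C, hC, hlen, hsupp P.start_mem_support, hsupp P.end_mem_support⟩
  · exact absurd (Walk.adj_of_length_eq_one hP₁) (hS.2 p hp q hq)

lemma Rtomic.exists_isCycle_across {X S₁ S₂ : Set V} (hX : Rtomic G r X) (hS : IsSep G S₁ S₂)
    (hXS : Disjoint X (S₁ ∩ S₂)) (h₁ : (X ∩ S₁).Nonempty) (h₂ : (X ∩ S₂).Nonempty) :
    ∃ (a : V) (C : G.Walk a a), C.IsCycle ∧ C.length ≤ r ∧ ∃ p ∈ C.support, ∃ q ∈ C.support,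
      p ∈ X ∧ q ∈ X ∧ p ∈ S₁ \ S₂ ∧ q ∈ S₂ \ S₁ := by
  have hstrict {v : V} (hv : v ∈ X) (hv₁ : v ∈ S₁) : v ∉ S₂ := fun hv₂ =>
    Set.disjoint_left.mp hXS hv ⟨hv₁, hv₂⟩
  obtain ⟨x₁, hx₁X, hx₁⟩ := h₁
  obtain ⟨x₂, hx₂X, hx₂⟩ := h₂
  have hx₂₁ : x₂ ∉ S₁ := fun h => hstrict hx₂X h hx₂
  obtain ⟨W, hW, -⟩ := hX x₁ hx₁X x₂ hx₂X fun h => hx₂₁ (h ▸ hx₁)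
  obtain ⟨p, q, P, hP, hp, hq⟩ := hW.exists_isLocalXPath_boundary hx₁ hx₂₁
  have hpX : p ∈ X := hP.1.1.1
  have hqX : q ∈ X := hP.1.1.2.1
  have hp' : p ∈ S₁ \ S₂ := ⟨hp, hstrict hpX hp⟩
  have hq' : q ∈ S₂ \ S₁ := ⟨hS.symm.mem_left_of_not_mem_right hq, hq⟩
  obtain ⟨a, C, hC, hlen, hpC, hqC⟩ := hP.1.exists_isCycle_of_isSep hS hp' hq'
  exact ⟨a, C, hC, hlen, p, hpC, q, hqC, hpX, hqX, hp', hq'⟩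

section Crossing

variable {A₁ A₂ C₁ C₂ : Set V}

lemma Crosses.swap_left (h : Crosses (A₁, A₂) (C₁, C₂)) : Crosses (A₂, A₁) (C₁, C₂) :=
  fun hn => h (by unfold Nested at *; tauto)

lemma Crosses.swap_right (h : Crosses (A₁, A₂) (C₁, C₂)) : Crosses (A₁, A₂) (C₂, C₁) :=
  fun hn => h (by unfold Nested at *; tauto)

lemma Crosses.inter_nonempty (h : Crosses (A₁, A₂) (C₁, C₂)) (hA : IsSep G A₁ A₂)
    (hC : IsSep G C₁ C₂) : (A₁ ∩ C₂).Nonempty := by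
  by_contra hne
  exact h (Or.inl ⟨fun v hv => hC.mem_left_of_not_mem_right fun hv₂ => hne ⟨v, hv, hv₂⟩,
    fun v hv => hA.symm.mem_left_of_not_mem_right fun hv₁ => hne ⟨v, hv₁, hv⟩⟩)

/-- No edge leaves the corner `A₂ ∩ C₂`, which crossing makes a nonempty proper subset. -/
lemma Crosses.false_of_not_nonempty (hG : G.Connected) (hA : IsSep G A₁ A₂)
    (hC : IsSep G C₁ C₂) (h : Crosses (A₁, A₂) (C₁, C₂)) (hX : ¬(A₁ ∩ A₂ ∩ C₂).Nonempty)
    (hY : ¬(C₁ ∩ C₂ ∩ A₂).Nonempty) : False := by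
  obtain ⟨v, hv⟩ := h.swap_left.inter_nonempty hA.symm hC
  obtain ⟨w, hwA, hwC⟩ := h.swap_right.inter_nonempty hA hC.symm
  obtain ⟨W⟩ := hG.preconnected v w
  obtain ⟨d, -, ⟨hdA, hdC⟩, hd⟩ :=
    W.exists_boundary_dart (A₂ ∩ C₂) hv fun hw => hX ⟨w, ⟨hwA, hw.1⟩, hw.2⟩
  have hdA₁ : d.fst ∉ A₁ := fun h => hX ⟨d.fst, ⟨h, hdA⟩, hdC⟩
  have hdC₁ : d.fst ∉ C₁ := fun h => hY ⟨d.fst, ⟨h, hdC⟩, hdA⟩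
  exact hd ⟨hA.symm.mem_of_adj ⟨hdA, hdA₁⟩ d.adj, hC.symm.mem_of_adj ⟨hdC, hdC₁⟩ d.adj⟩

lemma Crosses.sep_meets_sides (hG : G.Connected) (hA : IsSep G A₁ A₂) (hC : IsSep G C₁ C₂)
    (h : Crosses (A₁, A₂) (C₁, C₂)) :
    ((A₁ ∩ A₂ ∩ C₁).Nonempty ∧ (A₁ ∩ A₂ ∩ C₂).Nonempty) ∨
      ((C₁ ∩ C₂ ∩ A₁).Nonempty ∧ (C₁ ∩ C₂ ∩ A₂).Nonempty) := by
  by_contra hn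
  simp only [not_or, not_and_or] at hn
  obtain ⟨hX | hX, hY | hY⟩ := hn
  · exact h.swap_left.swap_right.false_of_not_nonempty hG hA.symm hC.symm
      (by rwa [Set.inter_comm A₂]) (by rwa [Set.inter_comm C₂])
  · exact h.swap_right.false_of_not_nonempty hG hA hC.symm hX (by rwa [Set.inter_comm C₂])
  · exact h.swap_left.false_of_not_nonempty hG hA.symm hC (by rwa [Set.inter_comm A₂]) hY
  · exact h.false_of_not_nonempty hG hA hC hX hY

end Crossing

end

/-- If two separations of a connected graph with `r`-tomic
separators `X` and `Y` cross, then `X` and `Y` are `r`-coupled. -/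
theorem statement9 {V : Type*} (G : SimpleGraph V) (r : ℕ) (hG : G.Connected)
    (A₁ A₂ C₁ C₂ : Set V)
    (h₁ : IsSep G A₁ A₂) (h₂ : IsSep G C₁ C₂)
    (ht₁ : Rtomic G r (A₁ ∩ A₂)) (ht₂ : Rtomic G r (C₁ ∩ C₂))
    (hcross : Crosses (A₁, A₂) (C₁, C₂)) :
    RCoupled G r (A₁ ∩ A₂) (C₁ ∩ C₂) := by
  by_cases hXY : (A₁ ∩ A₂ ∩ (C₁ ∩ C₂)).Nonempty
  · exact Or.inl hXY
  have hdisj : Disjoint (A₁ ∩ A₂) (C₁ ∩ C₂) :=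
    Set.disjoint_iff_inter_eq_empty.mpr (Set.not_nonempty_iff_eq_empty.mp hXY)
  refine Or.inr ⟨hdisj, ?_⟩
  rcases hcross.sep_meets_sides hG h₁ h₂ with ⟨hX₁, hX₂⟩ | ⟨hY₁, hY₂⟩
  · obtain ⟨a, C, hC, hlen, p, hpC, q, hqC, hpX, hqX, hp, hq⟩ :=
      ht₁.exists_isCycle_across h₂ hdisj hX₁ hX₂
    exact alternates_inter_right_of_isCycle h₂ hC hlen hpC hqC hpX hqX hp hq
  · obtain ⟨a, C, hC, hlen, p, hpC, q, hqC, hpY, hqY, hp, hq⟩ :=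
      ht₂.exists_isCycle_across h₁ hdisj.symm hY₁ hY₂
    exact alternates_inter_left_of_isCycle h₁ hC hlen hpC hqC hpY hqY hp hq

end LS
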